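/- Let T be an L-contraction (0 < L < 1) of a nonempty closed convex subset C of a Banach space into itself with fixed point p. Then the iteration x_{n+1} = T y_n, y_n = (1-α_n) z_n + α_n T z_n, z_n = (1-β_n) x_n + β_n T x_n with α_n, β_n ∈ (0,1) converges strongly to p, with ‖x_n - p‖ ≤ L^{n-1} ‖x_1 - p‖. -/

import Mathlib

/-! Since `T` fixes `p` and is an `L`-contraction, it maps the convex set `C ∩ closedBall p r`
into `C ∩ closedBall p (L * r)`, hence into itself. The two averaging steps therefore stay in
that set, and the final application of `T` shrinks the radius by the factor `L`. -/

open Filter Set Metric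

section

variable {E : Type*} [NormedAddCommGroup E] {C : Set E} {T : E → E} {L : ℝ} {p : E}

lemma mapsTo_inter_closedBall_mul (hTmaps : MapsTo T C C) (hL0 : 0 ≤ L)
    (hT : ∀ x ∈ C, ∀ y ∈ C, ‖T x - T y‖ ≤ L * ‖x - y‖) (hpC : p ∈ C) (hp : T p = p) (r : ℝ) :
    MapsTo T (C ∩ closedBall p r) (C ∩ closedBall p (L * r)) := by
  rintro w ⟨hwC, hwr⟩
  refine ⟨hTmaps hwC, ?_⟩
  rw [mem_closedBall_iff_norm] at hwr ⊢
  calc ‖T w - p‖ = ‖T w - T p‖ := by rw [hp]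
    _ ≤ L * ‖w - p‖ := hT w hwC p hpC
    _ ≤ L * r := by gcongr

variable [NormedSpace ℝ E]

def mannStep (T : E → E) (c : ℝ) (w : E) : E := (1 - c) • w + c • T w

lemma Convex.mannStep_mem {s : Set E} (hs : Convex ℝ s) (hT : MapsTo T s s)
    {c : ℝ} (hc0 : 0 ≤ c) (hc1 : c ≤ 1) {w : E} (hw : w ∈ s) : mannStep T c w ∈ s :=
  hs hw (hT hw) (by linarith) hc0 (by ring)

lemma apply_mannStep_mannStep_mem_inter_closedBall (hCcv : Convex ℝ C) (hTmaps : MapsTo T C C)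
    (hL0 : 0 ≤ L) (hL1 : L ≤ 1) (hT : ∀ x ∈ C, ∀ y ∈ C, ‖T x - T y‖ ≤ L * ‖x - y‖)
    (hpC : p ∈ C) (hp : T p = p) {a b r : ℝ} (ha0 : 0 ≤ a) (ha1 : a ≤ 1) (hb0 : 0 ≤ b)
    (hb1 : b ≤ 1) {w : E} (hw : w ∈ C ∩ closedBall p r) :
    T (mannStep T a (mannStep T b w)) ∈ C ∩ closedBall p (L * r) := by
  have hshrink := mapsTo_inter_closedBall_mul hTmaps hL0 hT hpC hp r
  have hr : 0 ≤ r := nonempty_closedBall.mp ⟨w, hw.2⟩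
  have hinv : MapsTo T (C ∩ closedBall p r) (C ∩ closedBall p r) :=
    hshrink.mono_right <| inter_subset_inter_right C <|
      closedBall_subset_closedBall <| mul_le_of_le_one_left hr hL1
  have hconv : Convex ℝ (C ∩ closedBall p r) := hCcv.inter (convex_closedBall p r)
  exact hshrink <| hconv.mannStep_mem hinv ha0 ha1 <| hconv.mannStep_mem hinv hb0 hb1 hw

end

theorem three_step_iteration_strong_convergence_general
    {E : Type*} [NormedAddCommGroup E] [NormedSpace ℝ E]
    (C : Set E) (hCcv : Convex ℝ C)
    (T : E → E) (hTmaps : Set.MapsTo T C C)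
    (L : ℝ) (hL0 : 0 < L) (hL1 : L < 1)
    (hT : ∀ x ∈ C, ∀ y ∈ C, ‖T x - T y‖ ≤ L * ‖x - y‖)
    (p : E) (hpC : p ∈ C) (hp : T p = p)
    (α β : ℕ → ℝ)
    (hα : ∀ n, 0 < α n ∧ α n < 1) (hβ : ∀ n, 0 < β n ∧ β n < 1)
    (x y z : ℕ → E) (hx0 : x 0 ∈ C)
    (hz : ∀ n, z n = (1 - β n) • x n + β n • T (x n))
    (hy : ∀ n, y n = (1 - α n) • z n + α n • T (z n))
    (hx : ∀ n, x (n + 1) = T (y n)) :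
    (∀ n, ‖x n - p‖ ≤ L ^ n * ‖x 0 - p‖) ∧ Tendsto x atTop (nhds p) := by
  have hmem : ∀ n, x n ∈ C ∩ closedBall p (L ^ n * ‖x 0 - p‖) := by
    intro n
    induction n with
    | zero => exact ⟨hx0, by simp [dist_eq_norm]⟩
    | succ n ih =>
      rw [hx n, hy n, hz n, pow_succ', mul_assoc]
      exact apply_mannStep_mannStep_mem_inter_closedBall hCcv hTmaps hL0.le hL1.le hT hpC hp
        (hα n).1.le (hα n).2.le (hβ n).1.le (hβ n).2.le ih
  have hbound : ∀ n, ‖x n - p‖ ≤ L ^ n * ‖x 0 - p‖ := fun n =>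
    mem_closedBall_iff_norm.mp (hmem n).2
  refine ⟨hbound, tendsto_iff_norm_sub_tendsto_zero.mpr ?_⟩
  have hgeom : Tendsto (fun n => L ^ n * ‖x 0 - p‖) atTop (nhds 0) := by
    simpa using (tendsto_pow_atTop_nhds_zero_of_lt_one hL0.le hL1).mul_const ‖x 0 - p‖
  exact squeeze_zero (fun n => norm_nonneg _) hbound hgeom

theorem three_step_iteration_strong_convergence
    {E : Type*} [NormedAddCommGroup E] [NormedSpace ℝ E] [CompleteSpace E]
    (C : Set E) (hCne : C.Nonempty) (hCcl : IsClosed C) (hCcv : Convex ℝ C)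
    (T : E → E) (hTmaps : Set.MapsTo T C C)
    (L : ℝ) (hL0 : 0 < L) (hL1 : L < 1)
    (hT : ∀ x ∈ C, ∀ y ∈ C, ‖T x - T y‖ ≤ L * ‖x - y‖)
    (p : E) (hpC : p ∈ C) (hp : T p = p)
    (α β : ℕ → ℝ)
    (hα : ∀ n, 0 < α n ∧ α n < 1) (hβ : ∀ n, 0 < β n ∧ β n < 1)
    (x y z : ℕ → E) (hx0 : x 0 ∈ C)
    (hz : ∀ n, z n = (1 - β n) • x n + β n • T (x n))
    (hy : ∀ n, y n = (1 - α n) • z n + α n • T (z n))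
    (hx : ∀ n, x (n + 1) = T (y n)) :
    (∀ n, ‖x n - p‖ ≤ L ^ n * ‖x 0 - p‖) ∧ Tendsto x atTop (nhds p) :=
  three_step_iteration_strong_convergence_general C hCcv T hTmaps L hL0 hL1 hT p hpC hp α β hα hβ x
    y z hx0 hz hy hx
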